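/- arXiv:1309.3636 — 2 statements merged into one kernel-verified Lean document; each statement's English description precedes it below -/
import Mathlib

section
/- Let f : S → T be a semigroup homomorphism. If T is IP-regular and the subset f⁻¹[E(T)] of S is IP-regular (as a subset), then S is IP-regular. -/
/-- A subset `A` of a semigroup `S` is *strongly IP-regular* if for every sequence `x` in `S`
with `FP x ⊆ A` there is no sequence `y` in `S` with `FP y ⊆ x₀ · FP₁ x`. -/
def StronglyIPRegular {S : Type*} [Semigroup S] (A : Set S) : Prop :=
  ∀ x : Stream' S, Hindman.FP x ⊆ A →
    ∀ y : Stream' S, ¬ Hindman.FP y ⊆ (x.head * ·) '' Hindman.FP x.tail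

/-- A semigroup `S` is *IP-regular* if `S \ E(S)`, the complement of the set of idempotent
elements, is the union of finitely many strongly IP-regular subsets. -/
def IPRegular (S : Type*) [Semigroup S] : Prop :=
  ∃ (n : ℕ) (f : Fin n → Set S), (∀ i, StronglyIPRegular (f i)) ∧
    {s : S | s * s = s}ᶜ = ⋃ i, f i

/-- A subset `P` of a semigroup `S` is *IP-regular (as a subset)* if `P \ E(P)`, where `E(P)`
is the set of idempotent elements of `S` belonging to `P`, is the union of finitely many
strongly IP-regular subsets. -/
def IPRegularSet {S : Type*} [Semigroup S] (P : Set S) : Prop :=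
  ∃ (n : ℕ) (f : Fin n → Set S), (∀ i, StronglyIPRegular (f i)) ∧
    P \ {s : S | s * s = s} = ⋃ i, f i

/-! A non-idempotent `s ∈ S` either has non-idempotent image, and then lies in the preimage of a
strongly IP-regular piece of `T`, or lies in `f⁻¹[E(T)] \ E(S)`. Preimages of strongly IP-regular
sets are strongly IP-regular, since `f` maps `FP x` onto `FP (f ∘ x)` and `x₀ · FP₁ x` onto
`f x₀ · FP₁ (f ∘ x)`. -/

namespace Hindman

theorem FP_map {S T : Type*} [Semigroup S] [Semigroup T] (f : S →ₙ* T) (x : Stream' S) :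
    FP (x.map f) = f '' FP x := by
  refine Set.Subset.antisymm (fun t ht => ?_) (Set.image_subset_iff.2 fun m hm => ?_)
  · generalize hy : x.map f = y at ht
    induction ht generalizing x with
    | head' a => exact ⟨x.head, FP.head _, by rw [← hy, Stream'.head_map]⟩
    | tail' a m _ ih =>
        obtain ⟨m', hm', rfl⟩ := ih x.tail (by rw [← hy, Stream'.tail_map])
        exact ⟨m', FP.tail _ _ hm', rfl⟩
    | cons' a m _ ih =>
        obtain ⟨m', hm', rfl⟩ := ih x.tail (by rw [← hy, Stream'.tail_map])
        exact ⟨x.head * m', FP.cons _ _ hm', by rw [map_mul, ← hy, Stream'.head_map]⟩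
  · induction hm with
    | head' a =>
        rw [Set.mem_preimage, ← Stream'.head_map f a]
        exact FP.head _
    | tail' a m _ ih => exact FP.tail _ _ (by rwa [Stream'.tail_map])
    | cons' a m _ ih =>
        rw [Set.mem_preimage, map_mul, ← Stream'.head_map f a]
        exact FP.cons _ _ (by rwa [Stream'.tail_map])

end Hindman

theorem StronglyIPRegular.preimage {S T : Type*} [Semigroup S] [Semigroup T] (f : S →ₙ* T)
    {A : Set T} (hA : StronglyIPRegular A) : StronglyIPRegular (f ⁻¹' A) := by
  intro x hx y hy
  refine hA (x.map f) ?_ (y.map f) ?_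
  · rw [Hindman.FP_map]
    exact Set.image_subset_iff.2 hx
  · rw [Hindman.FP_map, Stream'.tail_map, Hindman.FP_map, Stream'.head_map, Set.image_image]
    refine (Set.image_mono hy).trans_eq ?_
    simp only [Set.image_image, map_mul]

theorem Set.exists_fin_iUnion_eq_union {α : Type*} {p : Set α → Prop} {A B : Set α}
    (hA : ∃ (n : ℕ) (g : Fin n → Set α), (∀ i, p (g i)) ∧ A = ⋃ i, g i)
    (hB : ∃ (n : ℕ) (g : Fin n → Set α), (∀ i, p (g i)) ∧ B = ⋃ i, g i) :
    ∃ (n : ℕ) (g : Fin n → Set α), (∀ i, p (g i)) ∧ A ∪ B = ⋃ i, g i := by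
  obtain ⟨n, g, hg, rfl⟩ := hA
  obtain ⟨m, h, hh, rfl⟩ := hB
  refine ⟨n + m, Fin.append g h, Fin.addCases (by simpa using hg) (by simpa using hh), ?_⟩
  calc (⋃ i, g i) ∪ ⋃ i, h i = ⋃ s, Fin.append g h (finSumFinEquiv s) := by
        simp [Set.iUnion_sum]
    _ = ⋃ i, Fin.append g h i := finSumFinEquiv.iSup_comp

theorem MulHom.compl_setOf_idem_eq {S T : Type*} [Semigroup S] [Semigroup T] (f : S →ₙ* T) :
    {s : S | s * s = s}ᶜ =
      f ⁻¹' {t : T | t * t = t}ᶜ ∪ (f ⁻¹' {t : T | t * t = t} \ {s : S | s * s = s}) := by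
  ext s
  by_cases hs : s * s = s
  · simp [hs, ← map_mul]
  · simp [hs, em']

/-- If `f : S → T` is a semigroup homomorphism, `T` is IP-regular, and `f⁻¹[E(T)]` is
IP-regular as a subset of `S`, then `S` is IP-regular. -/
theorem ipRegular_of_mulHom {S T : Type*} [Semigroup S] [Semigroup T] (f : S →ₙ* T)
    (hT : IPRegular T) (hpre : IPRegularSet (f ⁻¹' {t : T | t * t = t})) :
    IPRegular S := by
  obtain ⟨n, g, hg, hgT⟩ := hT
  have hnonidem : ∃ (n : ℕ) (g : Fin n → Set S), (∀ i, StronglyIPRegular (g i)) ∧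
      f ⁻¹' {t : T | t * t = t}ᶜ = ⋃ i, g i :=
    ⟨n, fun i => f ⁻¹' g i, fun i => (hg i).preimage f, by rw [hgT, Set.preimage_iUnion]⟩
  rw [IPRegular, f.compl_setOf_idem_eq]
  exact Set.exists_fin_iUnion_eq_union hnonidem hpre
end

section
/- Let G be a group and let A₀ ⊆ A₁ ⊆ ⋯ ⊆ A_n be subgroups of G with A₀ the trivial subgroup, A_n = G, and A_i normal in A_{i+1} for every i < n. If each factor group A_{i+1}/A_i is IP-regular, then G is IP-regular. -/
/-! Strongly IP-regular sets pull back along semigroup homomorphisms and push forward along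
injective ones, since `FP` commutes with mapping a sequence and a sequence whose `FP`-set lies in
the range of a map lifts through it. For `N ⊴ G` this writes `G \ {1}` as the union of
`N \ {1}` and the preimage of `(G ⧸ N) \ {1}`, so IP-regularity passes to extensions; the
theorem follows by induction along the series. -/

namespace Hindman

theorem exists_map_eq_of_FP_subset_range {M N : Type*} [Semigroup N] (f : M → N)
    {x : Stream' N} (hx : FP x ⊆ Set.range f) : ∃ x' : Stream' M, x'.map f = x := by
  choose x' hx' using fun n => hx (FP.singleton x n)
  exact ⟨x', Stream'.ext fun n => hx' n⟩

variable {M N F : Type*} [Semigroup M] [Semigroup N] [FunLike F M N] [MulHomClass F M N]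

theorem FP_map_s7 (φ : F) (x : Stream' M) : FP (x.map φ) = φ '' FP x := by
  apply Set.Subset.antisymm
  · suffices ∀ w : Stream' N, ∀ b ∈ FP w, ∀ x : Stream' M, w = x.map φ → b ∈ φ '' FP x from
      fun b hb => this _ b hb x rfl
    intro w b hb
    induction hb with
    | head' w =>
      rintro x rfl
      exact ⟨x.head, FP.head x, Stream'.head_map φ x⟩
    | tail' w b _ ih =>
      rintro x rfl
      obtain ⟨a, ha, rfl⟩ := ih x.tail (Stream'.tail_map φ x)
      exact ⟨a, FP.tail _ _ ha, rfl⟩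
    | cons' w b _ ih =>
      rintro x rfl
      obtain ⟨a, ha, rfl⟩ := ih x.tail (Stream'.tail_map φ x)
      exact ⟨x.head * a, FP.cons _ _ ha, by rw [map_mul, Stream'.head_map]⟩
  · rintro _ ⟨a, ha, rfl⟩
    induction ha with
    | head' x => exact Stream'.head_map φ x ▸ FP.head _
    | tail' x a _ ih => exact FP.tail _ _ ih
    | cons' x a _ ih => exact map_mul φ _ _ ▸ Stream'.head_map φ x ▸ FP.cons _ _ ih

end Hindman

open Hindman

section

variable {M N F : Type*} [Semigroup M] [Semigroup N] [FunLike F M N] [MulHomClass F M N]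

theorem StronglyIPRegular.preimage_s7 (φ : F) {C : Set N} (hC : StronglyIPRegular C) :
    StronglyIPRegular (φ ⁻¹' C) := by
  intro x hx y hy
  refine hC (x.map φ) ?_ (y.map φ) ?_
  · rw [FP_map_s7]
    exact Set.image_subset_iff.mpr hx
  · rw [FP_map_s7, Set.image_subset_iff]
    intro b hb
    obtain ⟨a, ha, rfl⟩ := hy hb
    refine ⟨φ a, ?_, by simp⟩
    rw [Stream'.tail_map, FP_map_s7]
    exact Set.mem_image_of_mem φ ha

theorem StronglyIPRegular.image (φ : F) (hφ : Function.Injective φ) {B : Set M}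
    (hB : StronglyIPRegular B) : StronglyIPRegular (φ '' B) := by
  intro x hx y hy
  obtain ⟨x, rfl⟩ := exists_map_eq_of_FP_subset_range φ (hx.trans (Set.image_subset_range _ _))
  have hprod : ((x.map φ).head * ·) '' FP (x.map φ).tail = φ '' ((x.head * ·) '' FP x.tail) := by
    rw [Stream'.tail_map, FP_map_s7, Set.image_image, Set.image_image, Stream'.head_map]
    simp only [map_mul]
  rw [hprod] at hy
  obtain ⟨y, rfl⟩ := exists_map_eq_of_FP_subset_range φ (hy.trans (Set.image_subset_range _ _))
  rw [FP_map_s7, Set.image_subset_image_iff hφ] at hx hy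
  exact hB x hx y hy

def IsFinUnionStronglyIPRegular (B : Set M) : Prop :=
  ∃ (n : ℕ) (f : Fin n → Set M), (∀ i, StronglyIPRegular (f i)) ∧ B = ⋃ i, f i

namespace IsFinUnionStronglyIPRegular

theorem empty : IsFinUnionStronglyIPRegular (∅ : Set M) :=
  ⟨0, Fin.elim0, fun i => i.elim0, by simp⟩

theorem union {B C : Set M} (hB : IsFinUnionStronglyIPRegular B)
    (hC : IsFinUnionStronglyIPRegular C) : IsFinUnionStronglyIPRegular (B ∪ C) := by
  obtain ⟨m, f, hf, rfl⟩ := hB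
  obtain ⟨k, g, hg, rfl⟩ := hC
  refine ⟨m + k, Fin.append f g, Fin.addCases (by simpa using hf) (by simpa using hg), ?_⟩
  ext s
  simp only [Set.mem_union, Set.mem_iUnion, ← not_iff_not, not_or, not_exists,
    Fin.forall_fin_add, Fin.append_left, Fin.append_right]

theorem preimage_s7 (φ : F) {C : Set N} (hC : IsFinUnionStronglyIPRegular C) :
    IsFinUnionStronglyIPRegular (φ ⁻¹' C) := by
  obtain ⟨n, f, hf, rfl⟩ := hC
  exact ⟨n, fun i => φ ⁻¹' f i, fun i => (hf i).preimage_s7 φ, Set.preimage_iUnion⟩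

theorem image (φ : F) (hφ : Function.Injective φ) {B : Set M}
    (hB : IsFinUnionStronglyIPRegular B) : IsFinUnionStronglyIPRegular (φ '' B) := by
  obtain ⟨n, f, hf, rfl⟩ := hB
  exact ⟨n, fun i => φ '' f i, fun i => (hf i).image φ hφ, Set.image_iUnion⟩

end IsFinUnionStronglyIPRegular

theorem ipRegular_iff : IPRegular M ↔ IsFinUnionStronglyIPRegular {s : M | s * s = s}ᶜ :=
  Iff.rfl

theorem IPRegular.of_mulEquiv (e : M ≃* N) (h : IPRegular M) : IPRegular N := by
  have hidem : e.symm ⁻¹' {s : M | s * s = s}ᶜ = {s : N | s * s = s}ᶜ := by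
    ext s
    simp [← map_mul, e.symm.injective.eq_iff]
  rw [ipRegular_iff, ← hidem] at *
  exact h.preimage_s7 e.symm

end

theorem ipRegular_iff_isFinUnionStronglyIPRegular_compl_one {G : Type*} [Group G] :
    IPRegular G ↔ IsFinUnionStronglyIPRegular ({1}ᶜ : Set G) := by
  simp only [ipRegular_iff, mul_eq_right]
  rfl

theorem IPRegular.of_subsingleton {M : Type*} [Semigroup M] [Subsingleton M] : IPRegular M := by
  rw [ipRegular_iff]
  convert IsFinUnionStronglyIPRegular.empty
  exact Set.compl_empty_iff.mpr (Set.eq_univ_of_forall fun _ => Subsingleton.elim _ _)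

theorem IPRegular.of_normal_of_quotient {G : Type*} [Group G] {N : Subgroup G} [N.Normal]
    (hN : IPRegular N) (hQ : IPRegular (G ⧸ N)) : IPRegular G := by
  rw [ipRegular_iff_isFinUnionStronglyIPRegular_compl_one] at *
  have hcover : ({1}ᶜ : Set G) = N.subtype '' {1}ᶜ ∪ QuotientGroup.mk' N ⁻¹' {1}ᶜ := by
    ext s
    by_cases hs : s ∈ N
    · simp [hs]
    · simp [hs, (ne_of_mem_of_not_mem N.one_mem hs).symm]
  rw [hcover]
  exact (hN.image N.subtype N.subtype_injective).union (hQ.preimage_s7 (QuotientGroup.mk' N))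

/-- If a group `G` has a chain of subgroups `⊥ = A 0 ≤ A 1 ≤ ⋯ ≤ A n = ⊤` with each `A i`
normal in `A (i+1)` and each factor group `A (i+1) / A i` IP-regular, then `G` is
IP-regular. -/
theorem ipRegular_of_subnormal_series {G : Type*} [Group G] (n : ℕ)
    (A : Fin (n + 1) → Subgroup G)
    (hmono : ∀ i : Fin n, A i.castSucc ≤ A i.succ)
    (hbot : A 0 = ⊥) (htop : A (Fin.last n) = ⊤)
    (hnorm : ∀ i : Fin n, ((A i.castSucc).subgroupOf (A i.succ)).Normal)
    (hfac : ∀ i : Fin n,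
      letI := hnorm i
      IPRegular (↥(A i.succ) ⧸ (A i.castSucc).subgroupOf (A i.succ))) :
    IPRegular G := by
  have hA : ∀ i, IPRegular (A i) := by
    intro i
    induction i using Fin.induction with
    | zero =>
      have : Subsingleton (A 0) := hbot ▸ inferInstance
      exact .of_subsingleton
    | succ i ih =>
      have := hnorm i
      exact (ih.of_mulEquiv (Subgroup.subgroupOfEquivOfLe (hmono i)).symm).of_normal_of_quotient
        (hfac i)
  exact (hA (Fin.last n)).of_mulEquiv ((MulEquiv.subgroupCongr htop).trans Subgroup.topEquiv)
end
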